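/- arXiv:1812.11405 — 3 statements merged into one kernel-verified Lean document; each statement's English description precedes it below -/
import Mathlib

section
/- Let x, x̲, x̄ : ℝ₊ → ℝⁿ be differentiable functions with x̲ᵢ(0) ≤ xᵢ(0) ≤ x̄ᵢ(0) for all i. Suppose for each i and time t: whenever x̲ᵢ(t) = xᵢ(t) and x̲ⱼ(t) ≤ xⱼ(t) ≤ x̄ⱼ(t) for all j, we have x̲ᵢ'(t) < xᵢ'(t); and whenever x̄ᵢ(t) = xᵢ(t) and x̲ⱼ(t) ≤ xⱼ(t) ≤ x̄ⱼ(t) for all j, we have xᵢ'(t) < x̄ᵢ'(t). Then x̲ᵢ(t) ≤ xᵢ(t) ≤ x̄ᵢ(t) for all t ≥ 0 and all i. -/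
/-!
The 2n gaps `x i - lo i` and `hi i - x i` are nonnegative exactly on the box. The set of times
at which all gaps are nonnegative is closed, and it contains a right neighbourhood of each of
its points: a positive gap stays positive by continuity, and a vanishing gap has positive
derivative by the face condition, so it becomes positive immediately. Real induction
(`IsClosed.Icc_subset_of_forall_mem_nhdsWithin`) then fills every interval `[0, b]`.
-/

open Filter Topology Set

theorem HasDerivWithinAt.eventually_pos_of_eq_zero {f : ℝ → ℝ} {d t : ℝ}
    (hf : HasDerivWithinAt f d (Ioi t) t) (hft : f t = 0) (hd : 0 < d) :
    ∀ᶠ s in 𝓝[>] t, 0 < f s := by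
  have hslope : Tendsto (slope f t) (𝓝[>] t) (𝓝 d) :=
    (hasDerivWithinAt_iff_tendsto_slope' self_notMem_Ioi).1 hf
  filter_upwards [hslope.eventually (eventually_gt_nhds hd), self_mem_nhdsWithin]
    with s hs (hts : t < s)
  rwa [slope_def_field, hft, sub_zero, div_pos_iff_of_pos_right (sub_pos.2 hts)] at hs

theorem HasDerivWithinAt.eventually_pos {f : ℝ → ℝ} {d t : ℝ}
    (hf : HasDerivWithinAt f d (Ioi t) t) (hft : 0 ≤ f t) (hd : f t = 0 → 0 < d) :
    ∀ᶠ s in 𝓝[>] t, 0 < f s := by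
  rcases hft.eq_or_lt with hzero | hpos
  · exact hf.eventually_pos_of_eq_zero hzero.symm (hd hzero.symm)
  · exact hf.continuousWithinAt.eventually (eventually_gt_nhds hpos)

theorem nonneg_of_deriv_pos_on_faces {ι : Type*} [Finite ι] {f f' : ι → ℝ → ℝ} {a : ℝ}
    (hcont : ∀ k, ContinuousOn (f k) (Ici a))
    (hderiv : ∀ k t, a ≤ t → HasDerivWithinAt (f k) (f' k t) (Ioi t) t)
    (ha : ∀ k, 0 ≤ f k a)
    (hface : ∀ k t, a ≤ t → f k t = 0 → (∀ j, 0 ≤ f j t) → 0 < f' k t) :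
    ∀ t, a ≤ t → ∀ k, 0 ≤ f k t := by
  set s : Set ℝ := {t | ∀ k, 0 ≤ f k t}
  suffices ∀ b, Icc a b ⊆ s from fun t ht => this t ⟨ht, le_rfl⟩
  intro b
  refine IsClosed.Icc_subset_of_forall_mem_nhdsWithin ?_ ha ?_
  · have hclosed : IsClosed ((⋂ k, Icc a b ∩ f k ⁻¹' Ici 0) ∩ Icc a b) :=
      (isClosed_iInter fun k => ((hcont k).mono Icc_subset_Ici_self).preimage_isClosed_of_isClosed
        isClosed_Icc isClosed_Ici).inter isClosed_Icc
    convert hclosed using 1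
    ext t
    simp +contextual [s]
  · rintro t ⟨hts, hta, -⟩
    have hpos : ∀ᶠ u in 𝓝[>] t, ∀ k, 0 < f k u := eventually_all.2 fun k =>
      (hderiv k t hta).eventually_pos (hts k) fun hk => hface k t hta hk hts
    filter_upwards [hpos] with u hu k using (hu k).le

theorem stmt_8 {n : ℕ} (x lo hi x' lo' hi' : Fin n → ℝ → ℝ)
    (hx : ∀ i t, HasDerivAt (x i) (x' i t) t)
    (hlo : ∀ i t, HasDerivAt (lo i) (lo' i t) t)
    (hhi : ∀ i t, HasDerivAt (hi i) (hi' i t) t)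
    (h0 : ∀ i, lo i 0 ≤ x i 0 ∧ x i 0 ≤ hi i 0)
    (hfaceLo : ∀ i t, 0 ≤ t → lo i t = x i t →
      (∀ j, lo j t ≤ x j t ∧ x j t ≤ hi j t) → lo' i t < x' i t)
    (hfaceHi : ∀ i t, 0 ≤ t → hi i t = x i t →
      (∀ j, lo j t ≤ x j t ∧ x j t ≤ hi j t) → x' i t < hi' i t) :
    ∀ i t, 0 ≤ t → lo i t ≤ x i t ∧ x i t ≤ hi i t := by
  set gap : Fin n ⊕ Fin n → ℝ → ℝ :=
    Sum.elim (fun i t => x i t - lo i t) (fun i t => hi i t - x i t)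
  set gap' : Fin n ⊕ Fin n → ℝ → ℝ :=
    Sum.elim (fun i t => x' i t - lo' i t) (fun i t => hi' i t - x' i t)
  have hgap : ∀ k t, HasDerivAt (gap k) (gap' k t) t := by
    rintro (i | i) t
    exacts [(hx i t).sub (hlo i t), (hhi i t).sub (hx i t)]
  have hbox : ∀ t, (∀ k, 0 ≤ gap k t) ↔ ∀ j, lo j t ≤ x j t ∧ x j t ≤ hi j t := by
    simp [gap, Sum.forall, forall_and]
  have hface : ∀ k t, 0 ≤ t → gap k t = 0 → (∀ j, 0 ≤ gap j t) → 0 < gap' k t := by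
    rintro (i | i) t ht hk hin <;> simp only [gap, gap', Sum.elim_inl, Sum.elim_inr, sub_eq_zero,
      sub_pos] at hk ⊢
    exacts [hfaceLo i t ht hk.symm ((hbox t).1 hin), hfaceHi i t ht hk ((hbox t).1 hin)]
  intro i t ht
  exact (hbox t).1 (nonneg_of_deriv_pos_on_faces
    (fun k => (continuous_iff_continuousAt.2 fun t => (hgap k t).continuousAt).continuousOn)
    (fun k t _ => (hgap k t).hasDerivWithinAt) ((hbox 0).2 h0) hface t ht) i
end

section
/- If P⁺, P⁻ : ℝ₊ⁿ → ℝ₊ are sums of monomials with nonnegative coefficients and x ∈ ℝ₊ⁿ, then both the one-term tropicalization Dom(P⁺)(x) − Dom(P⁻)(x) (when dominant monomials exist with separation ε) and the true value P⁺(x) − P⁻(x) lie in the interval [F↓(x), F↑(x)] where F↓ = M_k⁺ − (1+(n−1)ε)M_l⁻ and F↑ = (1+(p−1)ε)M_k⁺ − M_l⁻. -/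
theorem sum_le_one_add_card_sub_one_mul_of_le_mul {ι R : Type*} [Fintype ι] [DecidableEq ι]
    [CommRing R] [PartialOrder R] [IsOrderedRing R] (M : ι → R) (k : ι) (ε : R)
    (hdom : ∀ j ≠ k, M j ≤ ε * M k) :
    ∑ j, M j ≤ (1 + ((Fintype.card ι : R) - 1) * ε) * M k := by
  have hcard : (((Finset.univ.erase k).card : ℕ) : R) = (Fintype.card ι : R) - 1 := by
    rw [Finset.card_erase_of_mem (Finset.mem_univ k), Finset.card_univ,
      Nat.cast_sub (Fintype.card_pos_iff.2 ⟨k⟩), Nat.cast_one]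
  calc ∑ j, M j = M k + ∑ j ∈ Finset.univ.erase k, M j :=
        (Finset.add_sum_erase _ _ (Finset.mem_univ k)).symm
    _ ≤ M k + ∑ _j ∈ Finset.univ.erase k, ε * M k := by
        gcongr with j hj
        exact hdom j (Finset.ne_of_mem_erase hj)
    _ = (1 + ((Fintype.card ι : R) - 1) * ε) * M k := by
        rw [Finset.sum_const, nsmul_eq_mul, hcard]
        ring

theorem stmt_13_general {p n : ℕ} (Mp : Fin p → ℝ) (Mm : Fin n → ℝ) (k : Fin p) (l : Fin n)
    (ε : ℝ) (hMp : ∀ j, 0 ≤ Mp j) (hMm : ∀ m, 0 ≤ Mm m)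
    (hdomp : ∀ j, j ≠ k → ε * Mp k ≥ Mp j)
    (hdomm : ∀ m, m ≠ l → ε * Mm l ≥ Mm m) :
    (Mp k - (1 + ((n : ℝ) - 1) * ε) * Mm l ≤ Mp k - Mm l ∧
        Mp k - Mm l ≤ (1 + ((p : ℝ) - 1) * ε) * Mp k - Mm l) ∧
      (Mp k - (1 + ((n : ℝ) - 1) * ε) * Mm l ≤ (∑ j, Mp j) - (∑ m, Mm m) ∧
        (∑ j, Mp j) - (∑ m, Mm m) ≤ (1 + ((p : ℝ) - 1) * ε) * Mp k - Mm l) := by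
  have hp_lower : Mp k ≤ ∑ j, Mp j := Finset.single_le_sum (fun j _ => hMp j) (Finset.mem_univ k)
  have hm_lower : Mm l ≤ ∑ m, Mm m := Finset.single_le_sum (fun m _ => hMm m) (Finset.mem_univ l)
  have hp_upper := sum_le_one_add_card_sub_one_mul_of_le_mul Mp k ε hdomp
  have hm_upper := sum_le_one_add_card_sub_one_mul_of_le_mul Mm l ε hdomm
  rw [Fintype.card_fin] at hp_upper hm_upper
  refine ⟨⟨?_, ?_⟩, ?_, ?_⟩ <;> linarith

theorem stmt_13 {p n : ℕ} (Mp : Fin p → ℝ) (Mm : Fin n → ℝ) (k : Fin p) (l : Fin n)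
    (ε : ℝ) (hMp : ∀ j, 0 ≤ Mp j) (hMm : ∀ m, 0 ≤ Mm m)
    (hε0 : 0 ≤ ε) (hε1 : ε ≤ 1)
    (hdomp : ∀ j, j ≠ k → ε * Mp k ≥ Mp j)
    (hdomm : ∀ m, m ≠ l → ε * Mm l ≥ Mm m) :
    (Mp k - (1 + ((n : ℝ) - 1) * ε) * Mm l ≤ Mp k - Mm l ∧
        Mp k - Mm l ≤ (1 + ((p : ℝ) - 1) * ε) * Mp k - Mm l) ∧
      (Mp k - (1 + ((n : ℝ) - 1) * ε) * Mm l ≤ (∑ j, Mp j) - (∑ m, Mm m) ∧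
        (∑ j, Mp j) - (∑ m, Mm m) ≤ (1 + ((p : ℝ) - 1) * ε) * Mp k - Mm l) :=
  stmt_13_general Mp Mm k l ε hMp hMm hdomp hdomm
end

section
/- Let F, F̲, F̄ : ℝⁿ → ℝ with F̲(y) ≤ F(y) ≤ F̄(y) for all y, where F̲ is nonincreasing and F̄ nondecreasing in each coordinate other than the i-th (in the appropriate polarity). If x solves x' = F(x) and the box bounds solve x̲ᵢ' = F̲ evaluated with each occurrence of xⱼ (j ≠ i) replaced by x̲ⱼ or x̄ⱼ according to its sign of occurrence, then the face-evaluated derivative of the lower bound is ≤ the derivative of x on the face {xᵢ = x̲ᵢ, x̲ⱼ ≤ xⱼ ≤ x̄ⱼ}. -/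
theorem stmt_17_general {n : ℕ} (i : Fin n) (F Flo : (Fin n → ℝ) → ℝ)
    (σ : Fin n → Bool)
    (hle : ∀ y, Flo y ≤ F y)
    (hmono : ∀ y z : Fin n → ℝ, y i = z i →
      (∀ j, j ≠ i → (σ j = true → z j ≤ y j) ∧ (σ j = false → y j ≤ z j)) →
      Flo z ≤ Flo y)
    (lo hi : Fin n → ℝ) (x : ℝ → (Fin n → ℝ)) (x' : ℝ → (Fin n → ℝ))
    (hxF : ∀ t, x' t i = F (x t))
    (t : ℝ)
    (hface : x t i = lo i) (hbox : ∀ j, lo j ≤ x t j ∧ x t j ≤ hi j) :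
    Flo (fun j => if j = i then lo i else if σ j then lo j else hi j) ≤ x' t i := by
  set corner : Fin n → ℝ := fun j => if j = i then lo i else if σ j then lo j else hi j
  have hcorner : ∀ j, j ≠ i →
      (σ j = true → corner j ≤ x t j) ∧ (σ j = false → x t j ≤ corner j) := by
    intro j hj
    refine ⟨fun hσ => ?_, fun hσ => ?_⟩
    · simpa [corner, hj, hσ] using (hbox j).1
    · simpa [corner, hj, hσ] using (hbox j).2
  calc Flo corner ≤ Flo (x t) := hmono _ _ (by simp [corner, hface]) hcorner
    _ ≤ F (x t) := hle _
    _ = x' t i := (hxF t).symm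

theorem stmt_17 {n : ℕ} (i : Fin n) (F Flo : (Fin n → ℝ) → ℝ)
    (σ : Fin n → Bool)
    (hle : ∀ y, Flo y ≤ F y)
    (hmono : ∀ y z : Fin n → ℝ, y i = z i →
      (∀ j, j ≠ i → (σ j = true → z j ≤ y j) ∧ (σ j = false → y j ≤ z j)) →
      Flo z ≤ Flo y)
    (lo hi : Fin n → ℝ) (x : ℝ → (Fin n → ℝ)) (x' : ℝ → (Fin n → ℝ))
    (hx : ∀ j t, HasDerivAt (fun s => x s j) (x' t j) t)
    (hxF : ∀ t, x' t i = F (x t))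
    (t : ℝ)
    (hface : x t i = lo i) (hbox : ∀ j, lo j ≤ x t j ∧ x t j ≤ hi j) :
    Flo (fun j => if j = i then lo i else if σ j then lo j else hi j) ≤ x' t i :=
  stmt_17_general i F Flo σ hle hmono lo hi x x' hxF t hface hbox
end
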